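/- For all i ∈ [d] and j ∈ [N/d], ms(ℓ_{i,j}, ℓ_{i,j+1}) ≥ n_1 − 1, where ℓ_{i,N/d} := ℓ_{i,0}. Equivalently, in the sequence consisting of the last n_1 − 2 edges of ℓ_{i,j} followed by the first n_1 − 2 edges of ℓ_{i,j+1}, any n_1 − 1 consecutive edges form a matching (no two of them agree in any coordinate). -/

import Mathlib

/-!
In every coordinate `l`, the edge `⟨x*⟩` is the pair of digits `(x / B, x mod B)` of `x`
with `B = n_l / m_l`, and `x ↦ ⟨x*⟩ l` is injective on `[n_1] ⊆ [m_l · B]`; so two edges of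
the same `M_{i,j}` never meet. Passing from `⟨(i,j)⟩` to `⟨(i,j+1)⟩` leaves the high digit of
every coordinate unchanged and raises the low digit by a carry `ε ∈ {0, 1}` (also at the
wrap-around `j + 1 = N/d`, since each block `B` of the mixed radix divides `N/d`). In a window
of `n_1 - 1` consecutive edges, an edge `⟨x*⟩ + ⟨(i,j)⟩` and an edge `⟨x'*⟩ + ⟨(i,j+1)⟩`
have `x' + 2 ≤ x`, and a carry of at most one cannot make `x` and `x' + ε` agree.
-/

/-- `⟨x*⟩`: the edge of `K_{n_1,…,n_k}` (with edge set `∏ l, Z_{m l} × Z_{n l / m l}`)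
whose `l`-th entry is `(x_{l,1}, x_{l,2})`, where `x = x_{l,1}·(n l / m l) + x_{l,2}`
with `x_{l,1} ∈ [m l]` and `x_{l,2} ∈ [n l / m l]`. -/
def xStar (k : ℕ) (n m : Fin k → ℕ) (x : ℕ) :
    ∀ l : Fin k, ZMod (m l) × ZMod (n l / m l) :=
  fun l => (((x / (n l / m l) : ℕ) : ZMod (m l)), ((x : ℕ) : ZMod (n l / m l)))

/-- `⟨(i,j)⟩`: the edge whose first entry is `(0,0)` and whose `l`-th entry
(`l ≥ 1`) is `(i_l, j_l)`, the `l`-th mixed-radix digits of `i` in base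
`(m 1, …, m (k-1))` and of `j` in base `(n 1 / m 1, …, n (k-1) / m (k-1))`. -/
def baseEdge (k : ℕ) (n m : Fin k → ℕ) (i j : ℕ) :
    ∀ l : Fin k, ZMod (m l) × ZMod (n l / m l) :=
  fun l =>
    if (l : ℕ) = 0 then (0, 0)
    else (((i / ∏ h ∈ Finset.univ.filter (fun h : Fin k => l < h), m h : ℕ) : ZMod (m l)),
          ((j / ∏ h ∈ Finset.univ.filter (fun h : Fin k => l < h), (n h / m h) : ℕ) :
            ZMod (n l / m l)))

open Finset

def digitPair (M B x : ℕ) : ZMod M × ZMod B := (((x / B : ℕ) : ZMod M), (x : ZMod B))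

lemma xStar_apply (k : ℕ) (n m : Fin k → ℕ) (x : ℕ) (l : Fin k) :
    xStar k n m x l = digitPair (m l) (n l / m l) x :=
  rfl

lemma Nat.eq_of_natCast_eq_of_lt {M a b : ℕ} (ha : a < M) (hb : b < M)
    (h : (a : ZMod M) = b) : a = b := by
  simpa only [ZMod.val_natCast_of_lt ha, ZMod.val_natCast_of_lt hb] using congrArg ZMod.val h

lemma digitPair_injOn (M B : ℕ) : Set.InjOn (digitPair M B) (Set.Iio (M * B)) := by
  intro x (hx : x < M * B) x' (hx' : x' < M * B) h
  have hB : 0 < B := Nat.pos_of_ne_zero (by rintro rfl; simp at hx)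
  have hdiv : x / B = x' / B := Nat.eq_of_natCast_eq_of_lt ((Nat.div_lt_iff_lt_mul hB).2 hx)
    ((Nat.div_lt_iff_lt_mul hB).2 hx') (congrArg Prod.fst h)
  have hmod : x % B = x' % B := (ZMod.natCast_eq_natCast_iff' _ _ _).1 (congrArg Prod.snd h)
  rw [← Nat.div_add_mod x B, hdiv, hmod, Nat.div_add_mod]

/-- Equal high digits put `x'`, `x' + ε` and `x` in one block of length `B`, where the
low digits determine the number; so a shift `ε ≤ 1` of the low digit cannot close a gap
of two. -/
lemma digitPair_add_ne_add_carry {M B x x' ε : ℕ} (hx : x < M * B) (hgap : x' + 2 ≤ x)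
    (hε : ε ≤ 1) (e : ZMod M × ZMod B) :
    digitPair M B x + e ≠ digitPair M B x' + (e + (0, (ε : ZMod B))) := by
  intro h
  have hB : 0 < B := Nat.pos_of_ne_zero (by rintro rfl; simp at hx)
  have hdiv : x / B = x' / B := by
    refine Nat.eq_of_natCast_eq_of_lt ((Nat.div_lt_iff_lt_mul hB).2 hx)
      ((Nat.div_lt_iff_lt_mul hB).2 (by omega)) ?_
    simpa [digitPair] using congrArg Prod.fst h
  have hcarry : (x' + ε) / B = x / B :=
    le_antisymm (Nat.div_le_div_right (by omega)) (hdiv ▸ Nat.div_le_div_right (by omega))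
  have hpair : digitPair M B x = digitPair M B (x' + ε) := by
    have hlow := congrArg Prod.snd h
    simp only [digitPair, Prod.snd_add] at hlow
    simp only [digitPair, hcarry, Prod.mk.injEq, true_and]
    push_cast
    linear_combination hlow
  have := digitPair_injOn M B hx (show x' + ε < M * B by omega) hpair
  omega

lemma Nat.prod_div_prod_of_dvd {ι : Type*} (s : Finset ι) (f g : ι → ℕ)
    (h : ∀ i ∈ s, g i ∣ f i) : (∏ i ∈ s, f i) / ∏ i ∈ s, g i = ∏ i ∈ s, f i / g i := by
  classical
  induction s using Finset.induction_on with
  | empty => simp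
  | insert a s ha ih =>
    simp only [Finset.forall_mem_insert] at h
    rw [prod_insert ha, prod_insert ha, prod_insert ha, ← ih h.2,
      Nat.div_mul_div_comm h.1 (prod_dvd_prod_of_dvd g f h.2)]

/-- The step `j ↦ (j + 1) mod L` changes the digit of `j` at place value `P` by at most one
(a carry), also at the wrap-around since `L / P ≡ 0 [MOD B]`. -/
lemma exists_natCast_succ_mod_div_eq {B P L j : ℕ} (hBP : P * B ∣ L) (hj : j < L) :
    ∃ ε ≤ (1 : ℕ), (((j + 1) % L / P : ℕ) : ZMod B) = ((j / P : ℕ) : ZMod B) + ε := by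
  refine ⟨if P ∣ j + 1 then 1 else 0, by split_ifs <;> omega, ?_⟩
  have hsucc : (((j + 1) / P : ℕ) : ZMod B) = ((j / P : ℕ) : ZMod B) +
      ((if P ∣ j + 1 then 1 else 0 : ℕ) : ZMod B) := by
    rw [Nat.succ_div, Nat.cast_add]
  rcases Nat.lt_or_ge (j + 1) L with hlt | hge
  · rw [Nat.mod_eq_of_lt hlt, hsucc]
  · rw [← hsucc, show j + 1 = L by omega, Nat.mod_self, Nat.zero_div, Nat.cast_zero, eq_comm,
      ZMod.natCast_eq_zero_iff]
    exact Nat.dvd_div_of_mul_dvd hBP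

lemma digitPeriod_dvd_prod_div_prod (k : ℕ) (n m : Fin k → ℕ) (hdvd : ∀ l, m l ∣ n l)
    (l : Fin k) (hl : (l : ℕ) ≠ 0) :
    (n l / m l) * ∏ h ∈ univ.filter (fun h : Fin k => l < h), (n h / m h) ∣
      (∏ h ∈ univ.filter (fun h : Fin k => (h : ℕ) ≠ 0), n h) /
        ∏ h ∈ univ.filter (fun h : Fin k => (h : ℕ) ≠ 0), m h := by
  rw [Nat.prod_div_prod_of_dvd _ _ _ fun h _ => hdvd h,
    ← prod_insert (f := fun h => n h / m h) (by simp)]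
  refine prod_dvd_prod_of_subset _ _ _ fun h hh => ?_
  simp only [mem_insert, mem_filter, mem_univ, true_and] at hh ⊢
  rcases hh with rfl | hh
  · exact hl
  · exact Nat.ne_of_gt (Nat.lt_of_le_of_lt (Nat.zero_le _) hh)

lemma exists_baseEdge_succ_mod (k : ℕ) (n m : Fin k → ℕ) {L : ℕ}
    (hL : ∀ l : Fin k, (l : ℕ) ≠ 0 →
      (n l / m l) * ∏ h ∈ univ.filter (fun h : Fin k => l < h), (n h / m h) ∣ L)
    (i : ℕ) {j : ℕ} (hj : j < L) (l : Fin k) :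
    ∃ ε ≤ (1 : ℕ), baseEdge k n m i ((j + 1) % L) l =
      baseEdge k n m i j l + (0, ((ε : ℕ) : ZMod (n l / m l))) := by
  by_cases hl : (l : ℕ) = 0
  · exact ⟨0, zero_le_one, by simp [baseEdge, hl]⟩
  · obtain ⟨ε, hε, h⟩ := exists_natCast_succ_mod_div_eq (B := n l / m l)
      ((mul_comm _ _).dvd.trans (hL l hl)) hj
    exact ⟨ε, hε, by simp only [baseEdge, if_neg hl, h, Prod.mk_add_mk, add_zero]⟩

/-- Lemma: `ms(ℓ_{i,j}, ℓ_{i,j+1}) ≥ n_1 - 1` (with `ℓ_{i,N/d} := ℓ_{i,0}`), where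
`ℓ_{i,j}(⟨x*⟩ + ⟨(i,j)⟩) = x`.  Concretely: `c` is the sequence consisting of the
last `n_1 - 2` edges of `ℓ_{i,j}` (i.e. `⟨x*⟩ + ⟨(i,j)⟩` for `x = 2, …, n_1 - 1`)
followed by the first `n_1 - 2` edges of `ℓ_{i,j+1}`, and any `n_1 - 1` consecutive
edges of `c` form a matching: no two of them agree in any coordinate. -/
theorem matchingMij_consecutive_matching
    (k : ℕ) (hk : 2 ≤ k) (n m : Fin k → ℕ)
    (hmono : ∀ i j : Fin k, i ≤ j → n i ≤ n j)
    (hdvd : ∀ i, m i ∣ n i)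
    (N d : ℕ)
    (hN : N = ∏ i ∈ Finset.univ.filter (fun i : Fin k => (i : ℕ) ≠ 0), n i)
    (hd : d = ∏ i ∈ Finset.univ.filter (fun i : Fin k => (i : ℕ) ≠ 0), m i)
    (n1 : ℕ) (hn1 : n1 = n ⟨0, by omega⟩)
    (i j : ℕ) (hj : j < N / d)
    (c : ℕ → (∀ l : Fin k, ZMod (m l) × ZMod (n l / m l)))
    (hc : ∀ q, c q =
      if q < n1 - 2 then xStar k n m (q + 2) + baseEdge k n m i j
      else xStar k n m (q - (n1 - 2)) + baseEdge k n m i ((j + 1) % (N / d))) :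
    ∀ p, p + (n1 - 1) ≤ 2 * (n1 - 2) →
      ∀ q q', p ≤ q → q < p + (n1 - 1) → p ≤ q' → q' < p + (n1 - 1) → q ≠ q' →
        ∀ l : Fin k, c q l ≠ c q' l := by
  intro p hp q q' hpq hqlt hpq' hqlt' hne l heq
  have hperiod : ∀ l : Fin k, (l : ℕ) ≠ 0 →
      (n l / m l) * ∏ h ∈ univ.filter (fun h : Fin k => l < h), (n h / m h) ∣ N / d :=
    fun l hl => hN ▸ hd ▸ digitPeriod_dvd_prod_div_prod k n m hdvd l hl
  obtain ⟨ε, hε, hnext⟩ := exists_baseEdge_succ_mod k n m hperiod i hj l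
  have hbound : ∀ x < n1, x < m l * (n l / m l) := fun x hx => by
    rw [Nat.mul_div_cancel' (hdvd l)]
    exact hx.trans_le (hn1 ▸ hmono _ l (Nat.zero_le _))
  have hinj : ∀ x < n1, ∀ x' < n1, ∀ e,
      digitPair (m l) (n l / m l) x + e = digitPair (m l) (n l / m l) x' + e → x = x' :=
    fun x hx x' hx' e h => digitPair_injOn _ _ (hbound x hx) (hbound x' hx') (add_right_cancel h)
  rw [hc q, hc q'] at heq
  -- in the mixed cases the window length gives the gap `q' - (n1 - 2) + 2 ≤ q + 2`
  split_ifs at heq with h h' <;> simp only [Pi.add_apply, xStar_apply, hnext] at heq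
  · have := hinj _ (by omega) _ (by omega) _ heq
    omega
  · exact digitPair_add_ne_add_carry (hbound _ (by omega)) (by omega) hε _ heq
  · exact digitPair_add_ne_add_carry (hbound _ (by omega)) (by omega) hε _ heq.symm
  · have := hinj _ (by omega) _ (by omega) _ heq
    omega
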